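/- Fix an integer k ≥ 2. The Shannon entropy of the k-th extreme Gumbel density λ^{(k)}(x) = (1/(k−1)!) e^{−kx} e^{−e^{−x}}, x ∈ ℝ, equals h(λ^{(k)}) = log (k−1)! − k(Σ_{i=1}^{k-1} 1/i − γ) + k, where γ is the Euler–Mascheroni constant. -/

import Mathlib

/-!
Substituting `t = exp (-x)` turns `λ⁽ᵏ⁾(x) dx` into the Gamma density
`t ^ (k - 1) e⁻ᵗ dt / (k - 1)!` and `log λ⁽ᵏ⁾(x)` into `-log (k - 1)! + k log t - t`.
The entropy is therefore a combination of `Γ(k) = (k - 1)!`, `Γ(k + 1) = k!` and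
`Γ'(k) = ∫ t ^ (k - 1) log t e⁻ᵗ dt = (k - 1)! (H_{k-1} - γ)`.
-/

open MeasureTheory Filter Real Set
open scoped Nat

theorem integral_exp_neg_smul_comp_exp_neg {E : Type*} [NormedAddCommGroup E] [NormedSpace ℝ E]
    (g : ℝ → E) : ∫ x, exp (-x) • g (exp (-x)) = ∫ t in Ioi 0, g t := by
  have hderiv : ∀ x ∈ univ, HasDerivWithinAt (fun x => exp (-x)) (-exp (-x)) univ x :=
    fun x _ => (hasDerivAt_neg x).exp.hasDerivWithinAt.congr_deriv (by ring)
  have himage : (fun x => exp (-x)) '' univ = Ioi 0 := by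
    rw [image_univ, ← range_exp, ← neg_surjective.range_comp exp]; rfl
  rw [← himage, integral_image_eq_integral_abs_deriv_smul MeasurableSet.univ hderiv
    (exp_injective.comp neg_injective).injOn g, Measure.restrict_univ]
  simp [abs_of_pos (exp_pos _)]

theorem abs_log_le_rpow_add_rpow_neg_div {t a : ℝ} (ht : 0 < t) (ha : 0 < a) :
    |log t| ≤ (t ^ a + t ^ (-a)) / a := by
  have hpos : log t ≤ t ^ a / a := log_le_rpow_div ht.le ha
  have hneg : -log t ≤ t ^ (-a) / a := by
    simpa [log_inv, inv_rpow ht.le, rpow_neg ht.le] using log_le_rpow_div (inv_pos.2 ht).le ha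
  have hpos' : 0 ≤ t ^ a / a := by positivity
  have hneg' : 0 ≤ t ^ (-a) / a := by positivity
  rw [abs_le, add_div]
  constructor <;> linarith

theorem integrableOn_pow_mul_exp_neg (n : ℕ) :
    IntegrableOn (fun t => t ^ n * exp (-t)) (Ioi 0) := by
  simpa [mul_comm] using GammaIntegral_convergent (s := n + 1) (by positivity)

theorem integral_pow_mul_exp_neg (n : ℕ) : ∫ t in Ioi 0, t ^ n * exp (-t) = n ! := by
  rw [← Gamma_nat_eq_factorial, Gamma_eq_integral (by positivity)]
  simp [mul_comm]

theorem integrableOn_rpow_mul_log_mul_exp_neg {s : ℝ} (hs : 0 < s) :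
    IntegrableOn (fun t => t ^ (s - 1) * log t * exp (-t)) (Ioi 0) := by
  have hbound := ((GammaIntegral_convergent (by positivity : 0 < 3 * s / 2)).add
    (GammaIntegral_convergent (by positivity : 0 < s / 2))).const_mul (2 / s)
  refine hbound.mono' (by fun_prop)
    ((ae_restrict_iff' measurableSet_Ioi).2 <| .of_forall fun t ht => ?_)
  have ht : 0 < t := ht
  have hlog := abs_log_le_rpow_add_rpow_neg_div ht (half_pos hs)
  have e1 : t ^ (s - 1) * t ^ (s / 2) = t ^ (3 * s / 2 - 1) := by
    rw [← rpow_add ht]; ring_nf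
  have e2 : t ^ (s - 1) * t ^ (-(s / 2)) = t ^ (s / 2 - 1) := by
    rw [← rpow_add ht]; ring_nf
  calc ‖t ^ (s - 1) * log t * exp (-t)‖ = t ^ (s - 1) * |log t| * exp (-t) := by
        rw [norm_mul, norm_mul, norm_of_nonneg (rpow_pos_of_pos ht _).le,
          norm_of_nonneg (exp_pos _).le, norm_eq_abs]
    _ ≤ t ^ (s - 1) * ((t ^ (s / 2) + t ^ (-(s / 2))) / (s / 2)) * exp (-t) := by gcongr
    _ = 2 / s * (exp (-t) * t ^ (3 * s / 2 - 1) + exp (-t) * t ^ (s / 2 - 1)) := by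
        rw [← e1, ← e2]; field_simp

theorem hasDerivAt_Gamma_of_pos {s : ℝ} (hs : 0 < s) :
    HasDerivAt Gamma (∫ t in Ioi 0, t ^ (s - 1) * log t * exp (-t)) s := by
  have hs' : 0 < (s : ℂ).re := by simpa using hs
  have hGamma : Complex.Gamma =ᶠ[nhds (s : ℂ)] Complex.GammaIntegral := by
    filter_upwards [(isOpen_lt continuous_const Complex.continuous_re).mem_nhds hs'] with z hz
    exact Complex.Gamma_eq_integral hz
  have hcomplex := (Complex.hasDerivAt_GammaIntegral hs').congr_of_eventuallyEq hGamma
  have hreal : (∫ t : ℝ in Ioi 0, (t : ℂ) ^ ((s : ℂ) - 1) * (log t * exp (-t)))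
      = ((∫ t in Ioi 0, t ^ (s - 1) * log t * exp (-t) : ℝ) : ℂ) := by
    rw [← integral_complex_ofReal]
    refine setIntegral_congr_fun measurableSet_Ioi fun t ht => ?_
    rw [← Complex.ofReal_one, ← Complex.ofReal_sub, ← Complex.ofReal_cpow (le_of_lt ht)]
    push_cast
    ring
  rw [hreal] at hcomplex
  exact hcomplex.real_of_complex

theorem integral_pow_mul_log_mul_exp_neg (n : ℕ) :
    ∫ t in Ioi 0, t ^ n * log t * exp (-t) = n ! * (harmonic n - eulerMascheroniConstant) := by
  have h := (hasDerivAt_Gamma_of_pos (by positivity : (0 : ℝ) < n + 1)).unique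
    (hasDerivAt_Gamma_nat n)
  simp only [add_sub_cancel_right, rpow_natCast] at h
  rw [h]
  ring

theorem integral_mul_log_gumbel (n : ℕ) {c : ℝ} (hc : 0 < c) :
    ∫ x, c * exp (-((n + 1) * x)) * exp (-exp (-x))
        * log (c * exp (-((n + 1) * x)) * exp (-exp (-x)))
      = c * n ! * (log c + (n + 1) * (harmonic n - eulerMascheroniConstant) - (n + 1)) := by
  set G : ℝ → ℝ := fun t => c * log c * (t ^ n * exp (-t))
    + c * (n + 1) * (t ^ n * log t * exp (-t)) - c * (t ^ (n + 1) * exp (-t))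
  have hpt : ∀ x, c * exp (-((n + 1) * x)) * exp (-exp (-x))
      * log (c * exp (-((n + 1) * x)) * exp (-exp (-x))) = exp (-x) • G (exp (-x)) := by
    intro x
    have hpow : exp (-((n + 1) * x)) = exp (-x) ^ (n + 1) := by
      rw [← exp_nat_mul]; push_cast; ring_nf
    rw [hpow, log_mul (by positivity) (exp_pos _).ne', log_mul hc.ne' (by positivity), log_pow]
    simp only [G, smul_eq_mul, log_exp]
    push_cast
    ring
  have hA := (integrableOn_pow_mul_exp_neg n).const_mul (c * log c)
  have hB := (integrableOn_rpow_mul_log_mul_exp_neg (by positivity : (0 : ℝ) < n + 1)).const_mul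
    (c * (n + 1))
  have hC := (integrableOn_pow_mul_exp_neg (n + 1)).const_mul c
  simp only [add_sub_cancel_right, rpow_natCast] at hB
  rw [integral_congr_ae (.of_forall hpt), integral_exp_neg_smul_comp_exp_neg]
  simp only [G]
  rw [integral_sub (by exact hA.add hB) hC, integral_add hA hB, integral_const_mul,
    integral_const_mul, integral_const_mul, integral_pow_mul_exp_neg, integral_pow_mul_exp_neg,
    integral_pow_mul_log_mul_exp_neg, Nat.factorial_succ]
  push_cast
  ring

/-- Shannon entropy of the k-th extreme Gumbel density
`λ^{(k)}(x) = (1/(k-1)!) e^{-kx} e^{-e^{-x}}`. -/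
theorem entropy_kth_extreme_gumbel (k : ℕ) (hk : 2 ≤ k)
    (lam : ℝ → ℝ)
    (hlam : ∀ x : ℝ,
      lam x = (1 / (k - 1).factorial : ℝ) * Real.exp (-(k * x)) * Real.exp (-Real.exp (-x))) :
    (- ∫ x : ℝ, lam x * Real.log (lam x)) =
      Real.log (k - 1).factorial
        - k * ((∑ i ∈ Finset.Icc 1 (k - 1), (1 : ℝ) / i) - eulerMascheroniConstant)
        + k := by
  obtain ⟨n, rfl⟩ : ∃ n, k = n + 1 := ⟨k - 1, by omega⟩
  have hlam' : lam = fun x => (1 / n ! : ℝ) * exp (-((n + 1) * x)) * exp (-exp (-x)) := by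
    funext x; simpa using hlam x
  have hharmonic : (harmonic n : ℝ) = ∑ i ∈ Finset.Icc 1 n, (1 : ℝ) / i := by
    simp [harmonic_eq_sum_Icc, one_div]
  have hfact : (n ! : ℝ) ≠ 0 := by positivity
  rw [hlam', integral_mul_log_gumbel n (by positivity), hharmonic, one_div, log_inv]
  simp only [add_tsub_cancel_right, Nat.cast_add, Nat.cast_one]
  field_simp
  ring
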